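/- If T ∈ B(H) and there exists a nonnegative operator P ∈ B(H) with TT* = T*PT, then (1 + ‖P‖)·T*T - TT* ≥ 0; in particular T is posinormal. -/

import Mathlib

open ContinuousLinearMap

/-!
Since `⟪T* P T f, f⟫ = ⟪P (T f), T f⟫`, Cauchy–Schwarz gives `⟪T* P T f, f⟫ ≤ ‖P‖ ‖T f‖² =
‖P‖ ⟪T* T f, f⟫`, so `c • T* T - T* P T ≥ 0` for every `c ≥ ‖P‖`; the hypothesis
`T T* = T* P T` then yields posinormality with `λ = √(1 + ‖P‖)`.
-/

namespace ContinuousLinearMap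

variable {𝕜 E F : Type*} [RCLike 𝕜] [NormedAddCommGroup E] [InnerProductSpace 𝕜 E]
  [CompleteSpace E] [NormedAddCommGroup F] [InnerProductSpace 𝕜 F] [CompleteSpace F]

theorem re_inner_adjoint_comp_comp_self_le (T : E →L[𝕜] F) (P : F →L[𝕜] F) (x : E) :
    RCLike.re (inner 𝕜 ((adjoint T ∘L P ∘L T) x) x) ≤ ‖P‖ * ‖T x‖ ^ 2 :=
  calc RCLike.re (inner 𝕜 ((adjoint T ∘L P ∘L T) x) x)
      = RCLike.re (inner 𝕜 (P (T x)) (T x)) := by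
        rw [comp_apply, adjoint_inner_left]; rfl
    _ ≤ ‖P (T x)‖ * ‖T x‖ := re_inner_le_norm _ _
    _ ≤ ‖P‖ * ‖T x‖ * ‖T x‖ := by gcongr; exact le_opNorm P (T x)
    _ = ‖P‖ * ‖T x‖ ^ 2 := by ring

theorem re_inner_smul_adjoint_comp_self_sub_nonneg (T : E →L[𝕜] F) (P : F →L[𝕜] F) {c : ℝ}
    (hc : ‖P‖ ≤ c) (x : E) :
    0 ≤ RCLike.re (inner 𝕜 (((c : 𝕜) • (adjoint T ∘L T) - adjoint T ∘L P ∘L T) x) x) := by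
  have hsmul : RCLike.re (inner 𝕜 (((c : 𝕜) • (adjoint T ∘L T)) x) x) = c * ‖T x‖ ^ 2 := by
    rw [smul_apply, inner_smul_left,
      apply_norm_sq_eq_inner_adjoint_left, RCLike.conj_ofReal, RCLike.re_ofReal_mul]
  rw [sub_apply, inner_sub_left, map_sub, hsmul, sub_nonneg]
  calc _ ≤ ‖P‖ * ‖T x‖ ^ 2 := re_inner_adjoint_comp_comp_self_le T P x
    _ ≤ c * ‖T x‖ ^ 2 := by gcongr

end ContinuousLinearMap

theorem stmt_4_general {H : Type*} [NormedAddCommGroup H] [InnerProductSpace ℂ H] [CompleteSpace H]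
    (T P : H →L[ℂ] H)
    (h : T * adjoint T = adjoint T * P * T) :
    (∀ f : H, 0 ≤ (inner ℂ (((1 + ‖P‖) • ((adjoint T) * T) - T * adjoint T) f) f : ℂ).re) ∧
    (∃ lam : ℝ, 0 < lam ∧
      ∀ f : H, 0 ≤ (inner ℂ ((lam ^ 2 • ((adjoint T) * T) - T * adjoint T) f) f : ℂ).re) := by
  have hpos : 0 < 1 + ‖P‖ := by positivity
  have key : ∀ f : H,
      0 ≤ (inner ℂ (((1 + ‖P‖) • ((adjoint T) * T) - T * adjoint T) f) f : ℂ).re := by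
    rw [h, ← Complex.coe_smul]
    exact re_inner_smul_adjoint_comp_self_sub_nonneg T P (le_add_of_nonneg_left zero_le_one)
  refine ⟨key, √(1 + ‖P‖), Real.sqrt_pos.mpr hpos, ?_⟩
  rwa [Real.sq_sqrt hpos.le]

/-- If `TT* = T*PT` with `P ≥ 0`, then `(1 + ‖P‖)·T*T - TT* ≥ 0`; in particular
`T` is posinormal. -/
theorem stmt_4 {H : Type*} [NormedAddCommGroup H] [InnerProductSpace ℂ H] [CompleteSpace H]
    (T P : H →L[ℂ] H) (hP : ∀ f : H, 0 ≤ (inner ℂ (P f) f : ℂ).re)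
    (h : T * adjoint T = adjoint T * P * T) :
    (∀ f : H, 0 ≤ (inner ℂ (((1 + ‖P‖) • ((adjoint T) * T) - T * adjoint T) f) f : ℂ).re) ∧
    (∃ lam : ℝ, 0 < lam ∧
      ∀ f : H, 0 ≤ (inner ℂ ((lam ^ 2 • ((adjoint T) * T) - T * adjoint T) f) f : ℂ).re) :=
  stmt_4_general T P h
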